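/- For any trace-free symmetric real 3×3 matrix M, one has −4·det(M) ≤ (2√6/9)·|M|³, where |M| is the Frobenius norm of M; moreover equality holds if and only if the two largest eigenvalues of M are equal. -/

import Mathlib

/-!
Conjugating by the orthogonal matrix with rows `v1, v2, v3` diagonalises `M`, so `det M`, `tr M`
and `|M|²` become `l1 l2 l3`, `l1 + l2 + l3` and `l1² + l2² + l3²`. When `a + b + c = 0`,
`(a² + b² + c²)³ = 54 (abc)² + 2 ((a - b)(b - c)(c - a))²`, which is the inequality after squaring.
Equality forces `abc ≤ 0` and two of `a, b, c` to coincide; for `a ≤ b ≤ c` this leaves exactly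
`b = c`.
-/

open Matrix

section Scalar

variable {a b c : ℝ}

theorem sum_sq_pow_three_eq_of_add_add_eq_zero (h : a + b + c = 0) :
    (a ^ 2 + b ^ 2 + c ^ 2) ^ 3 =
      54 * (a * b * c) ^ 2 + 2 * ((a - b) * (b - c) * (c - a)) ^ 2 := by
  obtain rfl : c = -a - b := by linarith
  ring

theorem sq_two_sqrt_six_div_nine_mul_sqrt_pow_three {s : ℝ} (hs : 0 ≤ s) :
    (2 * √6 / 9 * √s ^ 3) ^ 2 = 8 / 27 * s ^ 3 := by
  have h6 : √6 ^ 2 = 6 := Real.sq_sqrt (by norm_num)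
  have hs' : (√s ^ 3) ^ 2 = s ^ 3 := by rw [← pow_mul, mul_comm, pow_mul, Real.sq_sqrt hs]
  rw [mul_pow, div_pow, mul_pow, h6, hs']
  norm_num

theorem neg_four_mul_le_of_add_add_eq_zero (h : a + b + c = 0) :
    -4 * (a * b * c) ≤ 2 * √6 / 9 * √(a ^ 2 + b ^ 2 + c ^ 2) ^ 3 := by
  refine (le_abs_self _).trans (abs_le_of_sq_le_sq ?_ (by positivity))
  rw [sq_two_sqrt_six_div_nine_mul_sqrt_pow_three (by positivity),
    sum_sq_pow_three_eq_of_add_add_eq_zero h]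
  nlinarith [sq_nonneg ((a - b) * (b - c) * (c - a))]

theorem neg_four_mul_eq_iff_of_add_add_eq_zero (hab : a ≤ b) (hbc : b ≤ c)
    (h : a + b + c = 0) :
    -4 * (a * b * c) = 2 * √6 / 9 * √(a ^ 2 + b ^ 2 + c ^ 2) ^ 3 ↔ b = c := by
  have hR := sq_two_sqrt_six_div_nine_mul_sqrt_pow_three
    (by positivity : 0 ≤ a ^ 2 + b ^ 2 + c ^ 2)
  rw [sum_sq_pow_three_eq_of_add_add_eq_zero h] at hR
  constructor
  · intro heq
    have hneg : a * b * c ≤ 0 := by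
      have : 0 ≤ 2 * √6 / 9 * √(a ^ 2 + b ^ 2 + c ^ 2) ^ 3 := by positivity
      linarith
    have hV : (a - b) * (b - c) * (c - a) = 0 := by
      rw [← heq] at hR
      nlinarith [sq_nonneg ((a - b) * (b - c) * (c - a))]
    rcases mul_eq_zero.mp hV with habc | hca
    · rcases mul_eq_zero.mp habc with hab' | hbc'
      · obtain rfl : b = a := by linarith
        obtain rfl : c = -2 * b := by linarith
        have hb3 : b ^ 3 = 0 := by nlinarith [mul_nonneg (by linarith : 0 ≤ -b) (sq_nonneg b)]
        rw [pow_eq_zero_iff three_ne_zero] at hb3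
        linarith
      · linarith
    · linarith
  · rintro rfl
    obtain rfl : a = -2 * b := by linarith
    rw [← sq_eq_sq₀ (by nlinarith [mul_nonneg (by linarith : 0 ≤ b) (sq_nonneg b)])
      (by positivity), hR]
    ring

end Scalar

section Spectral

variable {ι n R : Type*} [Fintype ι] [CommRing R]

theorem sum_smul_vecMulVec_self_eq_transpose_mul_diagonal_mul [DecidableEq ι] (d : ι → R)
    (v : ι → n → R) :
    ∑ k, d k • vecMulVec (v k) (v k) = (of v)ᵀ * diagonal d * of v := by
  ext i j
  simp [mul_apply, Matrix.sum_apply, vecMulVec_apply, diagonal_apply, mul_comm, mul_left_comm]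

theorem sum_sum_sq_eq_trace_mul_transpose [Fintype n] (M : Matrix ι n R) :
    ∑ i, ∑ j, M i j ^ 2 = trace (M * Mᵀ) := by
  simp [trace, mul_apply, sq]

variable [Fintype n] [DecidableEq ι]
variable {P : Matrix ι n R} (hP : P * Pᵀ = 1) (d : ι → R)
include hP

theorem trace_transpose_mul_diagonal_mul_of_mul_transpose_eq_one :
    trace (Pᵀ * diagonal d * P) = ∑ k, d k := by
  rw [trace_mul_cycle, hP, one_mul, trace_diagonal]

theorem sum_sum_sq_transpose_mul_diagonal_mul_of_mul_transpose_eq_one :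
    ∑ i, ∑ j, (Pᵀ * diagonal d * P) i j ^ 2 = ∑ k, d k ^ 2 := by
  have hsq : Pᵀ * diagonal d * P * (Pᵀ * diagonal d * P)ᵀ = Pᵀ * diagonal (d ^ 2) * P := by
    simp only [transpose_mul, transpose_transpose, diagonal_transpose, Matrix.mul_assoc]
    rw [← Matrix.mul_assoc P, hP, Matrix.one_mul, ← Matrix.mul_assoc (diagonal d),
      diagonal_mul_diagonal, sq]
    rfl
  rw [sum_sum_sq_eq_trace_mul_transpose, hsq,
    trace_transpose_mul_diagonal_mul_of_mul_transpose_eq_one hP]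
  rfl

end Spectral

theorem det_transpose_mul_diagonal_mul_of_mul_transpose_eq_one {n R : Type*} [Fintype n]
    [DecidableEq n] [CommRing R] {P : Matrix n n R} (hP : P * Pᵀ = 1) (d : n → R) :
    det (Pᵀ * diagonal d * P) = ∏ k, d k := by
  rw [det_conj_of_mul_eq_one (mul_eq_one_comm.mp hP) hP, det_diagonal]

theorem stmt1_general (M : Matrix (Fin 3) (Fin 3) ℝ) (htr : M.trace = 0)
    (l1 l2 l3 : ℝ) (v1 v2 v3 : Fin 3 → ℝ)
    (h12 : l1 ≤ l2) (h23 : l2 ≤ l3)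
    (h11 : v1 ⬝ᵥ v1 = 1) (h22 : v2 ⬝ᵥ v2 = 1) (h33 : v3 ⬝ᵥ v3 = 1)
    (h12o : v1 ⬝ᵥ v2 = 0) (h13o : v1 ⬝ᵥ v3 = 0) (h23o : v2 ⬝ᵥ v3 = 0)
    (hM : M = l1 • Matrix.vecMulVec v1 v1 + l2 • Matrix.vecMulVec v2 v2
            + l3 • Matrix.vecMulVec v3 v3) :
    -4 * M.det ≤ (2 * Real.sqrt 6 / 9) * (Real.sqrt (∑ i, ∑ j, M i j ^ 2)) ^ 3 ∧
    (-4 * M.det = (2 * Real.sqrt 6 / 9) * (Real.sqrt (∑ i, ∑ j, M i j ^ 2)) ^ 3 ↔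
      l2 = l3) := by
  set P := of ![v1, v2, v3]
  set d := ![l1, l2, l3]
  have hP : P * Pᵀ = 1 := by
    ext i j
    change ![v1, v2, v3] i ⬝ᵥ ![v1, v2, v3] j = _
    fin_cases i <;> fin_cases j <;> simp [dotProduct_comm, *]
  have hMd : M = Pᵀ * diagonal d * P := by
    rw [hM, ← sum_smul_vecMulVec_self_eq_transpose_mul_diagonal_mul, Fin.sum_univ_three]
    rfl
  have hdet : M.det = l1 * l2 * l3 := by
    rw [hMd, det_transpose_mul_diagonal_mul_of_mul_transpose_eq_one hP, Fin.prod_univ_three]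
    rfl
  have hsum : l1 + l2 + l3 = 0 := by
    rw [← htr, hMd, trace_transpose_mul_diagonal_mul_of_mul_transpose_eq_one hP,
      Fin.sum_univ_three]
    rfl
  have hfro : ∑ i, ∑ j, M i j ^ 2 = l1 ^ 2 + l2 ^ 2 + l3 ^ 2 := by
    rw [hMd, sum_sum_sq_transpose_mul_diagonal_mul_of_mul_transpose_eq_one hP,
      Fin.sum_univ_three]
    rfl
  rw [hdet, hfro]
  exact ⟨neg_four_mul_le_of_add_add_eq_zero hsum,
    neg_four_mul_eq_iff_of_add_add_eq_zero h12 h23 hsum⟩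

/-- For a trace-free symmetric real 3×3 matrix `M` with eigenvalues `l1 ≤ l2 ≤ l3`
(given by an orthonormal spectral decomposition), one has
`−4 det M ≤ (2√6/9)|M|³` with equality iff `l2 = l3`. -/
theorem stmt1 (M : Matrix (Fin 3) (Fin 3) ℝ) (hsym : M.IsSymm) (htr : M.trace = 0)
    (l1 l2 l3 : ℝ) (v1 v2 v3 : Fin 3 → ℝ)
    (h12 : l1 ≤ l2) (h23 : l2 ≤ l3)
    (h11 : v1 ⬝ᵥ v1 = 1) (h22 : v2 ⬝ᵥ v2 = 1) (h33 : v3 ⬝ᵥ v3 = 1)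
    (h12o : v1 ⬝ᵥ v2 = 0) (h13o : v1 ⬝ᵥ v3 = 0) (h23o : v2 ⬝ᵥ v3 = 0)
    (hM : M = l1 • Matrix.vecMulVec v1 v1 + l2 • Matrix.vecMulVec v2 v2
            + l3 • Matrix.vecMulVec v3 v3) :
    -4 * M.det ≤ (2 * Real.sqrt 6 / 9) * (Real.sqrt (∑ i, ∑ j, M i j ^ 2)) ^ 3 ∧
    (-4 * M.det = (2 * Real.sqrt 6 / 9) * (Real.sqrt (∑ i, ∑ j, M i j ^ 2)) ^ 3 ↔
      l2 = l3) :=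
  stmt1_general M htr l1 l2 l3 v1 v2 v3 h12 h23 h11 h22 h33 h12o h13o h23o hM
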